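/- arXiv:2503.11523 — 2 statements merged into one kernel-verified Lean document; each statement's English description precedes it below -/
import Mathlib

section
/- For every k ≥ 0, the right Radau polynomial R⁺_{k+1} has k+1 distinct real roots, all lying in the interval [−1, 1]. -/
open Polynomial

/-- The Legendre polynomials, defined by the Rodrigues formula. -/
noncomputable def legendre (n : ℕ) : Polynomial ℝ :=
  C (1 / (2 ^ n * (n.factorial : ℝ))) * derivative^[n] ((X ^ 2 - 1) ^ n)

/-- The right Radau polynomial `R⁺_{k+1} = P_{k+1} − P_k`. -/
noncomputable def radauRight (k : ℕ) : Polynomial ℝ := legendre (k + 1) - legendre k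

private lemma iter_deriv_add (n : ℕ) (p q : ℝ[X]) :
    derivative^[n] (p + q) = derivative^[n] p + derivative^[n] q := by
  induction n generalizing p q with
  | zero => rfl
  | succ n ih => simp [Function.iterate_succ_apply, ih]

private lemma radau_eq (k : ℕ) :
    radauRight k = C (1 / (2 ^ k * (k.factorial : ℝ))) *
      derivative^[k] ((X - 1) ^ (k + 1) * (X + 1) ^ k) := by
  have hsplit : ((X : ℝ[X]) - 1) ^ (k + 1) * (X + 1) ^ k = (X - 1) * (X ^ 2 - 1) ^ k := by
    have h : ((X : ℝ[X]) ^ 2 - 1) = (X - 1) * (X + 1) := by ring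
    rw [h, mul_pow]; ring
  have hd1 : derivative ((X : ℝ[X]) ^ 2 - 1) = C 2 * X := by
    simp [derivative_X_pow]
    rw [← C_1, ← C_add]; norm_num
  have hder : derivative (((X : ℝ[X]) ^ 2 - 1) ^ (k + 1)) =
      C (2 * ((k : ℝ) + 1)) * (X * (X ^ 2 - 1) ^ k) := by
    rw [derivative_pow, hd1, Nat.add_sub_cancel,
      show ((((k : ℕ) + 1 : ℕ) : ℝ)) = ((k : ℝ) + 1) by push_cast; ring,
      show C (2 * ((k : ℝ) + 1)) = C 2 * C ((k : ℝ) + 1) from by rw [← C_mul]]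
    ring
  have hXmul : (X : ℝ[X]) * (X ^ 2 - 1) ^ k = (X ^ 2 - 1) ^ k + (X - 1) * (X ^ 2 - 1) ^ k := by
    ring
  unfold radauRight legendre
  rw [Function.iterate_succ_apply, hder, hXmul, iterate_derivative_C_mul, iter_deriv_add, hsplit]
  have hc : (1 : ℝ) / (2 ^ (k + 1) * ((k + 1).factorial : ℝ)) * (2 * ((k : ℝ) + 1)) =
      1 / (2 ^ k * (k.factorial : ℝ)) := by
    have h1 : ((k + 1).factorial : ℝ) = ((k : ℝ) + 1) * (k.factorial : ℝ) := by
      rw [Nat.factorial_succ]; push_cast; ring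
    have h2 : (k.factorial : ℝ) ≠ 0 := Nat.cast_ne_zero.mpr k.factorial_ne_zero
    have h3 : ((k : ℝ) + 1) ≠ 0 := by positivity
    field_simp [h1]
    rw [h1]
    ring
  rw [← mul_assoc, ← C_mul, hc]
  ring

private lemma rolle_step (f : ℝ[X]) {m : ℕ} (ρ : Fin (m + 1) → ℝ) (hρ : StrictMono ρ)
    (hr : ∀ i, f.eval (ρ i) = 0) :
    ∃ σ : Fin m → ℝ, StrictMono σ ∧
      ∀ i, σ i ∈ Set.Ioo (ρ i.castSucc) (ρ i.succ) ∧ (derivative f).eval (σ i) = 0 := by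
  have H : ∀ i : Fin m, ∃ x, x ∈ Set.Ioo (ρ i.castSucc) (ρ i.succ) ∧
      (derivative f).eval x = 0 := by
    intro i
    have hab : ρ i.castSucc < ρ i.succ := hρ (Fin.castSucc_lt_succ : i.castSucc < i.succ)
    obtain ⟨c, hc, hc'⟩ := exists_deriv_eq_zero hab (f.continuousOn)
      (by rw [hr, hr])
    refine ⟨c, hc, ?_⟩
    rwa [Polynomial.deriv] at hc'
  choose σ h1 h2 using H
  refine ⟨σ, ?_, fun i => ⟨h1 i, h2 i⟩⟩
  cases m with
  | zero => intro a b hab; exact absurd hab (by have := a.isLt; have := b.isLt; rw [Fin.lt_def]; omega)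
  | succ m =>
    rw [Fin.strictMono_iff_lt_succ]
    intro i
    have a1 := (h1 i.castSucc).2
    have a2 := (h1 i.succ).1
    rw [Fin.succ_castSucc] at a1
    exact lt_trans a1 a2

/-- For every `k ≥ 0`, the right Radau polynomial `R⁺_{k+1}` has `k+1` distinct real roots,
all lying in the interval `[−1, 1]`. -/
theorem radauRight_roots (k : ℕ) :
    ∃ ζ : Fin (k + 1) → ℝ, StrictMono ζ ∧
      ∀ j, ζ j ∈ Set.Icc (-1 : ℝ) 1 ∧ (radauRight k).eval (ζ j) = 0 := by
  set F : ℝ[X] := (X - 1) ^ (k + 1) * (X + 1) ^ k with hF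
  have hroot1 : ∀ j, j ≤ k → (derivative^[j] F).eval 1 = 0 := by
    intro j hj
    obtain ⟨g, hg⟩ := pow_sub_dvd_iterate_derivative_of_pow_dvd (p := F)
      (q := (X : ℝ[X]) - 1) (n := k + 1) j ⟨(X + 1) ^ k, rfl⟩
    rw [hg]
    simp [zero_pow (by omega : k + 1 - j ≠ 0)]
  have hrootm1 : ∀ j, j < k → (derivative^[j] F).eval (-1) = 0 := by
    intro j hj
    obtain ⟨g, hg⟩ := pow_sub_dvd_iterate_derivative_of_pow_dvd (p := F)
      (q := (X : ℝ[X]) + 1) (n := k) j ⟨(X - 1) ^ (k + 1), mul_comm _ _⟩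
    rw [hg]
    simp [zero_pow (by omega : k - j ≠ 0)]
  have key : ∀ j, j ≤ k → ∃ ρ : Fin (j + 1) → ℝ, StrictMono ρ ∧ ρ (Fin.last j) = 1 ∧
      ∀ i, ρ i ∈ Set.Ioc (-1 : ℝ) 1 ∧ (derivative^[j] F).eval (ρ i) = 0 := by
    intro j
    induction j with
    | zero =>
      intro _
      refine ⟨fun _ => 1, fun a b hab => absurd hab (by have := a.isLt; have := b.isLt; rw [Fin.lt_def]; omega), rfl, fun i => ⟨?_, ?_⟩⟩
      · constructor <;> norm_num
      · simpa using hroot1 0 (Nat.zero_le k)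
    | succ j ih =>
      intro hj
      obtain ⟨ρ, hmono, hlast, hprop⟩ := ih (by omega)
      set ρ' : Fin (j + 2) → ℝ := Fin.cons (-1) ρ with hρ'
      have hmono' : StrictMono ρ' := by
        rw [Fin.strictMono_iff_lt_succ]
        intro i
        induction i using Fin.cases with
        | zero =>
          have : ρ' 0 = -1 := rfl
          rw [Fin.castSucc_zero, this]
          have : ρ' (Fin.succ 0) = ρ 0 := Fin.cons_succ _ _ _
          rw [this]
          exact (hprop 0).1.1
        | succ i =>
          simp only [hρ', Fin.cons_succ]
          exact hmono (Fin.castSucc_lt_succ : i.castSucc < i.succ)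
      have hroots' : ∀ i, (derivative^[j] F).eval (ρ' i) = 0 := by
        intro i
        induction i using Fin.cases with
        | zero => exact hrootm1 j (by omega)
        | succ i => simp only [hρ', Fin.cons_succ]; exact (hprop i).2
      obtain ⟨σ, hσmono, hσ⟩ := rolle_step _ ρ' hmono' hroots'
      have hσlt1 : ∀ i, σ i < 1 := by
        intro i
        have h1 := (hσ i).1.2
        have h2 : ρ' i.succ ≤ ρ' (Fin.last (j + 1)) := hmono'.monotone (Fin.le_last _)
        have h3 : ρ' (Fin.last (j + 1)) = 1 := by
          rw [hρ', ← Fin.succ_last, Fin.cons_succ, hlast]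
        linarith [h1, h2.trans_eq h3]
      have hσgt : ∀ i, -1 < σ i := by
        intro i
        have h1 := (hσ i).1.1
        have h2 : ρ' 0 ≤ ρ' i.castSucc := hmono'.monotone (Fin.zero_le _)
        have h3 : ρ' 0 = -1 := rfl
        linarith [h3 ▸ h2]
      refine ⟨Fin.snoc σ 1, ?_, Fin.snoc_last _ _, ?_⟩
      · rw [Fin.strictMono_iff_lt_succ]
        intro i
        induction i using Fin.lastCases with
        | last =>
          rw [Fin.succ_last, Fin.snoc_last, Fin.snoc_castSucc]
          exact hσlt1 _
        | cast i =>
          rw [Fin.succ_castSucc, Fin.snoc_castSucc, Fin.snoc_castSucc]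
          exact hσmono (Fin.castSucc_lt_succ : i.castSucc < i.succ)
      · intro i
        induction i using Fin.lastCases with
        | last =>
          rw [Fin.snoc_last]
          exact ⟨⟨by norm_num, le_refl 1⟩, hroot1 (j + 1) hj⟩
        | cast i =>
          rw [Fin.snoc_castSucc]
          exact ⟨⟨hσgt i, (hσlt1 i).le⟩, by
            have := (hσ i).2
            rwa [Function.iterate_succ_apply'] ⟩
  obtain ⟨ρ, hmono, _, hprop⟩ := key k le_rfl
  refine ⟨ρ, hmono, fun i => ⟨⟨(hprop i).1.1.le, (hprop i).1.2⟩, ?_⟩⟩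
  rw [radau_eq k, eval_mul, (hprop i).2, mul_zero]
end

section
/- Let u be analytic on a neighborhood of an interval I of length h, and let π⁺u be the degree-k interpolant of u at the shifted roots of R⁺_{k+1} on I. Then the interpolation error admits the expansion u(x(ξ)) − π⁺u(x(ξ)) = h^{k+1} c_{k+1} R⁺_{k+1}(ξ) + Σ_{ℓ=k+2}^{∞} Q_ℓ(ξ) h^ℓ, where c_{k+1} is a constant depending on u and each Q_ℓ is a polynomial of degree at most ℓ; consequently at each root ζ⁺_j of R⁺_{k+1} the error is O(h^{k+2}). -/
open Polynomial
open Finset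

lemma legendre_degree (n : ℕ) : (legendre n).degree = (n : WithBot ℕ) := by
  have hX : ((X:ℝ[X]) ^ 2 - 1) = X ^ 2 - C 1 := by simp
  have hmon : (((X:ℝ[X]) ^ 2 - 1) ^ n).Monic := by
    rw [hX]; exact (monic_X_pow_sub_C (1:ℝ) (by norm_num)).pow n
  have hnd : (((X:ℝ[X]) ^ 2 - 1) ^ n).natDegree = 2 * n := by
    rw [hX, natDegree_pow, natDegree_X_pow_sub_C, mul_comm]
  set d := derivative^[n] (((X:ℝ[X]) ^ 2 - 1) ^ n) with hd
  have hcoeff : d.coeff n = ((n + n).descFactorial n : ℝ) := by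
    rw [hd, coeff_iterate_derivative]
    have h2 : n + n = 2 * n := by ring
    rw [h2, ← hnd, hmon.coeff_natDegree]
    simp
  have hcne : d.coeff n ≠ 0 := by
    rw [hcoeff]
    have : n + n ≥ n := by omega
    have h0 : (n + n).descFactorial n ≠ 0 := by
      intro h; rw [Nat.descFactorial_eq_zero_iff_lt] at h; omega
    exact_mod_cast h0
  have hlc : d.natDegree ≤ n := by
    have h := natDegree_iterate_derivative (((X:ℝ[X]) ^ 2 - 1) ^ n) n
    rw [hnd] at h
    rw [hd]
    omega
  have hCne : (1 / ((2:ℝ) ^ n * (n.factorial : ℝ))) ≠ 0 := by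
    positivity
  have hLcoeff : (legendre n).coeff n ≠ 0 := by
    rw [legendre, coeff_C_mul]
    exact mul_ne_zero hCne hcne
  have hLnd : (legendre n).natDegree ≤ n := by
    refine le_trans (natDegree_C_mul_le _ _) hlc
  have hne : legendre n ≠ 0 := fun h => hLcoeff (by simp [h])
  have : (legendre n).natDegree = n :=
    le_antisymm hLnd (le_natDegree_of_ne_zero hLcoeff)
  rw [degree_eq_natDegree hne, this]

lemma radauRight_degree (k : ℕ) : (radauRight k).degree = ((k+1 : ℕ) : WithBot ℕ) := by
  rw [radauRight, degree_sub_eq_left_of_degree_lt, legendre_degree]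
  rw [legendre_degree, legendre_degree]
  exact_mod_cast Nat.lt_succ_self k

lemma radauRight_ne_zero (k : ℕ) : radauRight k ≠ 0 := by
  intro h
  have := radauRight_degree k
  rw [h, degree_zero] at this
  exact absurd this.symm (by
    exact_mod_cast (WithBot.coe_ne_bot (a := (k+1:ℕ))))

/-- The interpolation error of the degree-`k` interpolant `π⁺u` of an analytic function `u` at
the shifted roots of `R⁺_{k+1}` on an interval `[a, a+h]` admits the expansion
`u(x(ξ)) − π⁺u(x(ξ)) = h^{k+1} c_{k+1} R⁺_{k+1}(ξ) + Σ_{ℓ=k+2}^∞ Q_ℓ(ξ) h^ℓ`, with each `Q_ℓ` a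
polynomial of degree at most `ℓ`; consequently at each root `ζ⁺_j` of `R⁺_{k+1}` the error is
`O(h^{k+2})`. -/
theorem radau_interpolation_error_expansion (k : ℕ) (a h₀ : ℝ) (hh₀ : 0 < h₀)
    (u : ℝ → ℝ) (s : Set ℝ) (hs : IsOpen s) (hsub : Set.Icc a (a + h₀) ⊆ s)
    (hu : AnalyticOnNhd ℝ u s)
    (ζ : Fin (k + 1) → ℝ) (hmono : StrictMono ζ)
    (hroots : ∀ j, ζ j ∈ Set.Icc (-1 : ℝ) 1 ∧ (radauRight k).eval (ζ j) = 0)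
    (hlast : ζ (Fin.last k) = 1)
    (x : ℝ → ℝ → ℝ) (hx : ∀ h ξ, x h ξ = a + h / 2 * (ξ + 1))
    (err : ℝ → ℝ → ℝ)
    (herr : ∀ h ξ, err h ξ =
      u (x h ξ) -
        (Lagrange.interpolate Finset.univ (fun j => x h (ζ j))
          (fun j => u (x h (ζ j)))).eval (x h ξ)) :
    ∃ c : ℝ, ∃ Q : ℕ → Polynomial ℝ, (∀ ℓ : ℕ, (Q ℓ).degree ≤ ((ℓ + k + 2 : ℕ) : ℕ)) ∧
      ∃ h₁ : ℝ, 0 < h₁ ∧ h₁ ≤ h₀ ∧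
        (∀ h ∈ Set.Ioc (0 : ℝ) h₁, ∀ ξ ∈ Set.Icc (-1 : ℝ) 1,
          HasSum (fun ℓ : ℕ => (Q ℓ).eval ξ * h ^ (ℓ + k + 2))
            (err h ξ - h ^ (k + 1) * c * (radauRight k).eval ξ)) ∧
        ∀ j : Fin (k + 1), ∃ C : ℝ, ∀ h ∈ Set.Ioc (0 : ℝ) h₁,
          |err h (ζ j)| ≤ C * h ^ (k + 2) := by
  classical
  have hζinj : Function.Injective ζ := hmono.injective
  have hζs : Set.InjOn ζ (Finset.univ : Finset (Fin (k+1))) := fun i _ j _ h => hζinj h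
  have hcard : #(Finset.univ : Finset (Fin (k+1))) = k + 1 := by simp
  -- power series of u at a
  have ha : AnalyticAt ℝ u a := hu a (hsub ⟨le_refl a, by linarith⟩)
  obtain ⟨p, hp⟩ := ha
  rw [hasFPowerSeriesAt_iff] at hp
  obtain ⟨r, hr0, hball⟩ := Metric.eventually_nhds_iff.mp hp
  set A : ℕ → ℝ := fun n => p.coeff n with hA
  -- the error polynomials
  set e : ℕ → Polynomial ℝ := fun n =>
    (X + 1) ^ n - Lagrange.interpolate Finset.univ ζ (fun j => (ζ j + 1) ^ n) with he
  have hX1 : ((X:ℝ[X]) + 1) = X + C 1 := by simp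
  have hXm : ((X:ℝ[X]) + 1).Monic := by rw [hX1]; exact monic_X_add_C 1
  have hXpm : ∀ n : ℕ, (((X:ℝ[X]) + 1) ^ n).Monic := fun n => hXm.pow n
  have hXnd : ∀ n : ℕ, (((X:ℝ[X]) + 1) ^ n).natDegree = n := by
    intro n; rw [natDegree_pow, hX1, natDegree_X_add_C, mul_one]
  have hXdeg : ∀ n : ℕ, (((X:ℝ[X]) + 1) ^ n).degree ≤ (n : WithBot ℕ) := by
    intro n
    refine degree_le_natDegree.trans ?_
    rw [hXnd]
  have hInterpDeg : ∀ f : Fin (k+1) → ℝ,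
      (Lagrange.interpolate Finset.univ ζ f).degree < ((k+1 : ℕ) : WithBot ℕ) := by
    intro f
    have := Lagrange.degree_interpolate_lt f hζs
    rwa [hcard] at this
  have hedeg : ∀ n : ℕ, k ≤ n → (e n).degree ≤ (n : WithBot ℕ) := by
    intro n hn
    refine (degree_sub_le _ _).trans (max_le (hXdeg n) ?_)
    have h4 := Lagrange.degree_interpolate_le (fun j => (ζ j + 1) ^ n) hζs
    rw [hcard] at h4
    refine h4.trans ?_
    exact_mod_cast (by omega : k + 1 - 1 ≤ n)
  -- exactness : e n = 0 for n ≤ k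
  have hezero : ∀ n : ℕ, n ≤ k → e n = 0 := by
    intro n hn
    have hdeg : (((X:ℝ[X]) + 1) ^ n).degree < #(Finset.univ : Finset (Fin (k+1))) := by
      rw [hcard]
      exact lt_of_le_of_lt (hXdeg n) (by exact_mod_cast Nat.lt_succ_of_le hn)
    have := Lagrange.eq_interpolate hζs hdeg
    rw [he]
    have hvals : (fun j => eval (ζ j) (((X:ℝ[X]) + 1) ^ n)) = fun j => (ζ j + 1) ^ n := by
      funext j; simp
    simp only [← hvals]
    rw [← this]
    ring
  -- nodal polynomial
  set N : Polynomial ℝ := Lagrange.nodal Finset.univ ζ with hN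
  have hNnd : N.natDegree = k + 1 := by rw [hN, Lagrange.natDegree_nodal, hcard]
  have hNmonic : N.Monic := Lagrange.nodal_monic
  have hNdeg : N.degree = ((k+1:ℕ) : WithBot ℕ) := by
    rw [hN, Lagrange.degree_nodal, hcard]
  have hNeval : ∀ j, eval (ζ j) N = 0 := fun j =>
    Lagrange.eval_nodal_at_node (Finset.mem_univ j)
  -- e (k+1) = N
  have heN : e (k+1) = N := by
    refine Polynomial.eq_of_degree_sub_lt_of_eval_index_eq Finset.univ hζs ?_ ?_
    · rw [hcard]
      rw [Polynomial.degree_lt_iff_coeff_zero]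
      intro m hm
      have hmn : k + 1 ≤ m := by exact_mod_cast hm
      rcases eq_or_lt_of_le hmn with hm' | hm'
      · -- m = k+1 : coefficients both 1
        rw [coeff_sub, he]
        simp only [coeff_sub]
        have h1 : (((X:ℝ[X]) + 1) ^ (k+1)).coeff m = 1 := by
          have := (hXpm (k+1)).coeff_natDegree
          rw [hXnd (k+1)] at this
          rw [← hm']; exact this
        have h2 : (Lagrange.interpolate Finset.univ ζ fun j => (ζ j + 1) ^ (k+1)).coeff m = 0 := by
          refine coeff_eq_zero_of_degree_lt ?_
          refine lt_of_lt_of_le (hInterpDeg _) ?_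
          exact_mod_cast hmn
        have h3 : N.coeff m = 1 := by
          have := hNmonic.coeff_natDegree
          rw [hNnd] at this
          rw [← hm']; exact this
        rw [h1, h2, h3]; ring
      · -- m > k+1 : all coefficients vanish
        rw [coeff_sub]
        have hml : ((k+1:ℕ) : WithBot ℕ) < ((m:ℕ) : WithBot ℕ) := by exact_mod_cast hm'
        have h1 : (e (k+1)).coeff m = 0 := by
          refine coeff_eq_zero_of_degree_lt ?_
          exact lt_of_le_of_lt (hedeg (k+1) (by omega)) hml
        have h2 : N.coeff m = 0 := by
          refine coeff_eq_zero_of_degree_lt ?_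
          rw [hNdeg]; exact hml
        rw [h1, h2]; ring
    · intro j _
      rw [hNeval j, he]
      simp only [eval_sub]
      rw [Lagrange.eval_interpolate_at_node _ hζs (Finset.mem_univ j)]
      simp
  -- radauRight k = C L * N
  set L : ℝ := (radauRight k).leadingCoeff with hL
  have hRnd : (radauRight k).natDegree = k + 1 :=
    natDegree_eq_of_degree_eq_some (radauRight_degree k)
  have hLne : L ≠ 0 := leadingCoeff_ne_zero.mpr (radauRight_ne_zero k)
  have hRN : radauRight k = C L * N := by
    refine Polynomial.eq_of_degree_sub_lt_of_eval_index_eq Finset.univ hζs ?_ ?_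
    · rw [hcard, Polynomial.degree_lt_iff_coeff_zero]
      intro m hm
      have hmn : k + 1 ≤ m := by exact_mod_cast hm
      rcases eq_or_lt_of_le hmn with hm' | hm'
      · have hm'' : m = k + 1 := hm'.symm
        rw [coeff_sub, coeff_C_mul, hm'', ← hRnd, Polynomial.coeff_natDegree, ← hL]
        have hN1 : N.coeff (radauRight k).natDegree = 1 := by
          have := hNmonic.coeff_natDegree
          rw [hNnd] at this
          rw [hRnd]; exact this
        rw [hN1]
        ring
      · have hml : ((k+1:ℕ) : WithBot ℕ) < ((m:ℕ) : WithBot ℕ) := by exact_mod_cast hm'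
        rw [coeff_sub, coeff_C_mul]
        have h1 : (radauRight k).coeff m = 0 := by
          refine coeff_eq_zero_of_degree_lt ?_
          rw [radauRight_degree]; exact hml
        have h2 : N.coeff m = 0 := by
          refine coeff_eq_zero_of_degree_lt ?_
          rw [hNdeg]; exact hml
        rw [h1, h2]; ring
    · intro j _
      rw [(hroots j).2]
      simp [hNeval j]
  have hRe : ∀ ξ : ℝ, (radauRight k).eval ξ = L * (e (k+1)).eval ξ := by
    intro ξ
    rw [hRN, heN]
    simp
  -- choose the constants
  refine ⟨A (k+1) * (2:ℝ)⁻¹ ^ (k+1) / L,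
    fun ℓ => C (A (ℓ+k+2) * (2:ℝ)⁻¹ ^ (ℓ+k+2)) * e (ℓ+k+2), ?_, min h₀ (r/2), ?_, min_le_left _ _,
    ?_, ?_⟩
  · intro ℓ
    refine (degree_mul_le _ _).trans ?_
    refine le_trans (add_le_add degree_C_le (hedeg (ℓ+k+2) (by omega))) ?_
    simp
  · exact lt_min hh₀ (by linarith)
  · -- the main HasSum statement
    rintro h ⟨hh0, hh1⟩ ξ ⟨hξ1, hξ2⟩
    have hhr : h < r := by
      have := le_trans hh1 (min_le_right h₀ (r/2)); linarith
    have hne2 : (h : ℝ) / 2 ≠ 0 := by positivity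
    -- power series sums
    have hsum : ∀ τ : ℝ, τ ∈ Set.Icc (-1:ℝ) 1 →
        HasSum (fun n => (h/2*(τ+1))^n * A n) (u (x h τ)) := by
      intro τ ⟨hτ1, hτ2⟩
      have hyr : dist (h/2*(τ+1)) 0 < r := by
        rw [Real.dist_eq, sub_zero, abs_of_nonneg (by nlinarith)]
        nlinarith
      have := hball hyr
      simp only [smul_eq_mul] at this
      have hxa : x h τ = a + h/2*(τ+1) := by rw [hx]
      rw [hxa]
      simpa [mul_comm] using this
    -- Lagrange basis invariance under the affine map
    have hbasis : ∀ j : Fin (k+1),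
        eval (x h ξ) (Lagrange.basis Finset.univ (fun i => x h (ζ i)) j) =
          eval ξ (Lagrange.basis Finset.univ ζ j) := by
      intro j
      rw [Lagrange.basis, Lagrange.basis, eval_prod, eval_prod]
      refine Finset.prod_congr rfl ?_
      intro i hi
      have hij : j ≠ i := fun hji => (Finset.mem_erase.mp hi).1 hji.symm
      have hζij : ζ j - ζ i ≠ 0 := sub_ne_zero.mpr (hζinj.ne hij)
      simp only [Lagrange.basisDivisor, eval_mul, eval_C, eval_sub, eval_X]
      rw [hx, hx, hx]
      have hd1 : a + h / 2 * (ζ j + 1) - (a + h / 2 * (ζ i + 1)) = h/2 * (ζ j - ζ i) := by ring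
      have hd2 : a + h / 2 * (ξ + 1) - (a + h / 2 * (ζ i + 1)) = h/2 * (ξ - ζ i) := by ring
      rw [hd1, hd2, mul_inv, mul_comm ((h/2)⁻¹), mul_assoc, inv_mul_cancel_left₀ hne2]
    -- the interpolation nodes are injective
    have hvinj : Set.InjOn (fun i => x h (ζ i)) (Finset.univ : Finset (Fin (k+1))) := by
      intro i _ j _ hij
      simp only [hx] at hij
      have : ζ i = ζ j := by
        field_simp at hij
        have h' : h * (ζ i + 1) = h * (ζ j + 1) := by linarith
        have := mul_left_cancel₀ (ne_of_gt hh0) h'; linarith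
      exact hζinj this
    -- error as a convergent series
    have hF : HasSum (fun n => (h/2)^n * A n * (e n).eval ξ) (err h ξ) := by
      have hinterp : (Lagrange.interpolate Finset.univ (fun j => x h (ζ j))
          (fun j => u (x h (ζ j)))).eval (x h ξ) =
          ∑ j : Fin (k+1), eval ξ (Lagrange.basis Finset.univ ζ j) * u (x h (ζ j)) := by
        rw [Lagrange.interpolate_apply, eval_finset_sum]
        refine Finset.sum_congr rfl ?_
        intro j _
        rw [eval_mul, eval_C, hbasis j, mul_comm]
      have h1 : HasSum (fun n => (h/2*(ξ+1))^n * A n) (u (x h ξ)) := hsum ξ ⟨hξ1, hξ2⟩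
      have h2 : HasSum
          (fun n => ∑ j : Fin (k+1),
            eval ξ (Lagrange.basis Finset.univ ζ j) * ((h/2*(ζ j+1))^n * A n))
          (∑ j : Fin (k+1), eval ξ (Lagrange.basis Finset.univ ζ j) * u (x h (ζ j))) := by
        refine hasSum_sum ?_
        intro j _
        exact (hsum (ζ j) (hroots j).1).mul_left _
      have h3 := h1.sub h2
      rw [herr, hinterp]
      have hfun : (fun n => (h/2*(ξ+1))^n * A n -
          ∑ j : Fin (k+1), eval ξ (Lagrange.basis Finset.univ ζ j) * ((h/2*(ζ j+1))^n * A n)) =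
          (fun n => (h/2)^n * A n * (e n).eval ξ) := by
        funext n
        have heval : (e n).eval ξ =
            (ξ+1)^n - ∑ j : Fin (k+1), (ζ j + 1)^n * eval ξ (Lagrange.basis Finset.univ ζ j) := by
          rw [he]
          simp only [eval_sub, eval_pow, eval_add, eval_X, eval_one]
          rw [Lagrange.interpolate_apply, eval_finset_sum]
          congr 1
          refine Finset.sum_congr rfl ?_
          intro j _
          rw [eval_mul, eval_C]
        rw [heval, mul_sub, Finset.mul_sum]
        congr 1
        · rw [mul_pow]; ring
        · refine Finset.sum_congr rfl ?_
          intro j _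
          rw [mul_pow]; ring
      rw [← hfun]
      exact h3
    -- shift the series
    set F : ℕ → ℝ := fun n => (h/2)^n * A n * (e n).eval ξ with hFdef
    have hshift := (hasSum_nat_add_iff (f := F) (k+2)).mpr
      (by rwa [sub_add_cancel] :
        HasSum F ((err h ξ - ∑ i ∈ Finset.range (k+2), F i) + ∑ i ∈ Finset.range (k+2), F i))
    have hsumrange : ∑ i ∈ Finset.range (k+2), F i =
        h ^ (k+1) * (A (k+1) * (2:ℝ)⁻¹ ^ (k+1) / L) * (radauRight k).eval ξ := by
      rw [Finset.sum_eq_single (k+1)]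
      · simp only [hFdef]
        rw [hRe]
        have hpow : (h/2)^(k+1) = h^(k+1) * (2:ℝ)⁻¹ ^ (k+1) := by
          rw [div_eq_mul_inv, mul_pow]
        rw [hpow]
        field_simp
      · intro i hi hine
        have : i ≤ k := by
          rw [Finset.mem_range] at hi; omega
        simp only [hFdef]
        rw [hezero i this]
        simp
      · intro h'
        exact absurd (Finset.mem_range.mpr (by omega)) h'
    rw [hsumrange] at hshift
    convert hshift using 2 with ℓ
    · rfl
    simp only [hFdef, eval_mul, eval_C]
    have : ℓ + (k + 2) = ℓ + k + 2 := by omega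
    rw [this]
    rw [div_eq_mul_inv, mul_pow]
    ring
  · -- error vanishes at the nodes
    intro j
    refine ⟨0, ?_⟩
    rintro h ⟨hh0, hh1⟩
    have hvinj : Set.InjOn (fun i => x h (ζ i)) (Finset.univ : Finset (Fin (k+1))) := by
      intro i _ j' _ hij
      simp only [hx] at hij
      have : ζ i = ζ j' := by
        field_simp at hij
        have h' : h * (ζ i + 1) = h * (ζ j' + 1) := by linarith
        have := mul_left_cancel₀ (ne_of_gt hh0) h'; linarith
      exact hζinj this
    have : err h (ζ j) = 0 := by
      rw [herr]
      rw [Lagrange.eval_interpolate_at_node _ hvinj (Finset.mem_univ j)]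
      ring
    rw [this]
    simp
end
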